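/- Fix t ∈ ℝ. There exist h₀ > 0, s₀ > 0 and C > 0 such that for all h with |h| ≤ h₀ and all s with |s| ≤ s₀, writing x = γ(t) + h·n(t), y = γ(t+s), r = x − y, κ = κ(t), κ′ = κ′(t), the following hold: (1) |‖r‖² − h² − s²(1 + hκ) − (h/3)κ′s³| ≤ C s⁴; (2) |r·n(t) − h − (κ/2)s² − (κ′/6)s³| ≤ C s⁴; (3) |r·n(t+s) − h + (s²/2)(κ + hκ²)| ≤ C s³; (4) |r·τ(t) + s − (κ²/6)s³| ≤ C s⁴; (5) |r·τ(t+s) + (1 + hκ)s + (s²/2)hκ′| ≤ C s³; (6) |n(t)·n(t+s) − 1 + (κ²/2)s²| ≤ C s³ and |τ(t)·τ(t+s) − 1 + (κ²/2)s²| ≤ C s³; (7) |n(t)·τ(t+s) + κs + (κ′/2)s²| ≤ C s³. In particular the constant C can be chosen independent of h for |h| ≤ h₀. -/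

import Mathlib

/-!
In the orthonormal frame `(τ(t), n(t))` the coordinates of `γ(t) - γ(t+s)` and of `τ(t+s)` solve
the Frenet system of the curve. A function vanishing at `0` whose derivative is `O(sⁿ)` is
`O(sⁿ⁺¹)`, so integrating the system repeatedly gives the Taylor expansions of these four
coordinates to the orders needed. Every quantity in the theorem is a polynomial in them that is
affine in `h`, which is why `C` does not depend on `h` for `|h| ≤ 1`.
-/

open Real Filter Topology MeasureTheory

noncomputable section

/-- Euclidean dot product on `ℝ × ℝ`. -/
def dot2 (v w : ℝ × ℝ) : ℝ := v.1 * w.1 + v.2 * w.2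

/-- Unit tangent vector `τ(s) = γ′(s)`. -/
def tang (γ : ℝ → ℝ × ℝ) (s : ℝ) : ℝ × ℝ := deriv γ s

/-- Unit normal vector `n(s) = (τ₂(s), −τ₁(s))`. -/
def nor (γ : ℝ → ℝ × ℝ) (s : ℝ) : ℝ × ℝ := ((deriv γ s).2, -(deriv γ s).1)

/-- Signed curvature `κ(s) = −γ″(s)·n(s)`. -/
def curv (γ : ℝ → ℝ × ℝ) (s : ℝ) : ℝ := -(dot2 (deriv (deriv γ) s) (nor γ s))

open Asymptotics Metric

theorem isBigO_pow_succ_of_hasDerivAt {E : Type*} [NormedAddCommGroup E] [NormedSpace ℝ E]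
    {f f' : ℝ → E} {n : ℕ} (hf : ∀ᶠ x in 𝓝 0, HasDerivAt f (f' x) x) (hf0 : f 0 = 0)
    (hf' : f' =O[𝓝 0] (· ^ n)) : f =O[𝓝 0] (· ^ (n + 1)) := by
  obtain ⟨C, hC0, hC⟩ := hf'.exists_nonneg
  obtain ⟨ε, hε, hball⟩ := eventually_nhds_iff_ball.1 (hf.and hC.bound)
  refine .of_bound C ?_
  filter_upwards [ball_mem_nhds 0 hε] with x hx
  have hsub : closedBall (0 : ℝ) ‖x‖ ⊆ ball 0 ε := closedBall_subset_ball (by simpa using hx)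
  have hbound : ∀ y ∈ closedBall (0 : ℝ) ‖x‖, ‖f' y‖ ≤ C * ‖x‖ ^ n := fun y hy => by
    refine (hball y (hsub hy)).2.trans ?_
    rw [norm_pow]
    gcongr
    simpa using hy
  have := (convex_closedBall (0 : ℝ) ‖x‖).norm_image_sub_le_of_norm_hasDerivWithin_le
    (fun y hy => (hball y (hsub hy)).1.hasDerivWithinAt) hbound
    (mem_closedBall_self (norm_nonneg x)) (by simp : x ∈ closedBall (0 : ℝ) ‖x‖)
  simpa [hf0, norm_pow, pow_succ, mul_assoc] using this

theorem isBigO_pow_of_le {E : Type*} [Norm E] {f : ℝ → E} {m n : ℕ}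
    (hf : f =O[𝓝 0] (· ^ n)) (hmn : m ≤ n) : f =O[𝓝 0] (· ^ m) := by
  rcases hmn.eq_or_lt with rfl | hlt
  · exact hf
  · exact hf.trans (isLittleO_pow_pow hlt).isBigO

theorem Asymptotics.IsBigO.mul_pow {f g : ℝ → ℝ} {m n : ℕ} (hf : f =O[𝓝 0] (· ^ m))
    (hg : g =O[𝓝 0] (· ^ n)) : (fun x => f x * g x) =O[𝓝 0] (· ^ (m + n)) :=
  (hf.mul hg).congr_right fun x => (pow_add x m n).symm

theorem ContinuousAt.isBigO_pow_zero {f : ℝ → ℝ} (hf : ContinuousAt f 0) :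
    f =O[𝓝 0] (· ^ 0) :=
  (hf.tendsto.isBigO_one ℝ).congr_right fun x => (pow_zero x).symm

theorem isBigO_sub_taylor_one {k k' : ℝ → ℝ} (hk : ∀ x, HasDerivAt k (k' x) x)
    (hk' : DifferentiableAt ℝ k' 0) :
    (fun s => k s - k 0 - k' 0 * s) =O[𝓝 0] (· ^ 2) :=
  isBigO_pow_succ_of_hasDerivAt
    (.of_forall fun x => (((hk x).sub_const (k 0)).sub
      ((hasDerivAt_id x).const_mul (k' 0))).congr_deriv (by simp))
    (by simp) (hk'.hasDerivAt.isBigO_sub.congr_right fun x => by simp)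

theorem HasDerivAt.isBigO_sub_pow_one {f : ℝ → ℝ} {f' : ℝ} (hf : HasDerivAt f f' 0) :
    (fun x => f x - f 0) =O[𝓝 0] (· ^ 1) :=
  hf.isBigO_sub.congr_right fun x => by simp

theorem hasDerivAt_deriv {E : Type*} [NormedAddCommGroup E] [NormedSpace ℝ E] {f : ℝ → E}
    (hf : ContDiff ℝ (⊤ : ℕ∞) f) (u : ℝ) : HasDerivAt (deriv f) (deriv (deriv f) u) u :=
  ((hf.iterate_deriv 1).differentiable (by simp) u).hasDerivAt

theorem abs_add_mul_le (x y : ℝ) {h : ℝ} (hh : |h| ≤ 1) : |x + h * y| ≤ |x| + |y| :=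
  calc |x + h * y| ≤ |x| + |h| * |y| := by rw [← abs_mul]; exact abs_add_le _ _
    _ ≤ |x| + |y| := by gcongr; exact mul_le_of_le_one_left (abs_nonneg _) hh

/-- For a unit-speed curve `γ`, `isFrenetSolution_frame` shows that this system is solved by the
coordinates `a, b` of `γ(t) - γ(t + s)` and `c, d` of `τ(t + s)` in the frame `(τ(t), n(t))`,
with `k s = κ(t + s)`. -/
structure IsFrenetSolution (k a b c d : ℝ → ℝ) : Prop where
  hasDerivAt_a : ∀ x, HasDerivAt a (-c x) x
  hasDerivAt_b : ∀ x, HasDerivAt b (-d x) x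
  hasDerivAt_c : ∀ x, HasDerivAt c (k x * d x) x
  hasDerivAt_d : ∀ x, HasDerivAt d (-(k x * c x)) x
  a_zero : a 0 = 0
  b_zero : b 0 = 0
  c_zero : c 0 = 1
  d_zero : d 0 = 0

namespace IsFrenetSolution

variable {k k' a b c d : ℝ → ℝ}

theorem isBigO_d (hF : IsFrenetSolution k a b c d) (hk : ContinuousAt k 0) :
    d =O[𝓝 0] (· ^ 1) :=
  isBigO_pow_succ_of_hasDerivAt (.of_forall hF.hasDerivAt_d) hF.d_zero
    (hk.isBigO_pow_zero.mul_pow (hF.hasDerivAt_c 0).continuousAt.isBigO_pow_zero).neg_left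

theorem isBigO_c_sub_one (hF : IsFrenetSolution k a b c d) (hk : ContinuousAt k 0) :
    (fun s => c s - 1) =O[𝓝 0] (· ^ 2) :=
  isBigO_pow_succ_of_hasDerivAt (.of_forall fun x => (hF.hasDerivAt_c x).sub_const 1)
    (by simp [hF.c_zero]) (hk.isBigO_pow_zero.mul_pow (hF.isBigO_d hk))

theorem isBigO_a (hF : IsFrenetSolution k a b c d) : a =O[𝓝 0] (· ^ 1) :=
  isBigO_pow_succ_of_hasDerivAt (.of_forall hF.hasDerivAt_a) hF.a_zero
    (hF.hasDerivAt_c 0).continuousAt.isBigO_pow_zero.neg_left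

theorem isBigO_b (hF : IsFrenetSolution k a b c d) (hk : ContinuousAt k 0) :
    b =O[𝓝 0] (· ^ 2) :=
  isBigO_pow_succ_of_hasDerivAt (.of_forall hF.hasDerivAt_b) hF.b_zero (hF.isBigO_d hk).neg_left

theorem isBigO_a_add (hF : IsFrenetSolution k a b c d) (hk : ContinuousAt k 0) :
    (fun s => a s + s) =O[𝓝 0] (· ^ 3) :=
  isBigO_pow_succ_of_hasDerivAt
    (.of_forall fun x => (hF.hasDerivAt_a x).add (hasDerivAt_id x))
    (by simp [hF.a_zero])
    ((hF.isBigO_c_sub_one hk).neg_left.congr (fun x => by ring) fun x => rfl)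

theorem isBigO_d_sub_taylor (hF : IsFrenetSolution k a b c d) (hk : ∀ x, HasDerivAt k (k' x) x)
    (hk' : DifferentiableAt ℝ k' 0) :
    (fun s => d s - (-(k 0 * s) - k' 0 / 2 * s ^ 2)) =O[𝓝 0] (· ^ 3) := by
  refine isBigO_pow_succ_of_hasDerivAt (.of_forall fun x => (hF.hasDerivAt_d x).sub
    (((hasDerivAt_id x).const_mul (k 0)).neg.sub ((hasDerivAt_pow 2 x).const_mul (k' 0 / 2))))
    (by simp [hF.d_zero]) ?_
  -- `d' + k 0 + k' 0 * s = -(k s - k 0 - k' 0 * s) - k s * (c s - 1)`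
  have hkc := (hk 0).continuousAt.isBigO_pow_zero.mul_pow
    (hF.isBigO_c_sub_one (hk 0).continuousAt)
  refine ((isBigO_sub_taylor_one hk hk').neg_left.sub hkc).congr (fun x => ?_) (fun x => rfl)
  ring

theorem isBigO_c_sub_taylor (hF : IsFrenetSolution k a b c d) (hk : ∀ x, HasDerivAt k (k' x) x)
    (hk' : DifferentiableAt ℝ k' 0) :
    (fun s => c s - (1 - k 0 ^ 2 / 2 * s ^ 2)) =O[𝓝 0] (· ^ 3) := by
  refine isBigO_pow_succ_of_hasDerivAt (.of_forall fun x => (hF.hasDerivAt_c x).sub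
    ((hasDerivAt_const x 1).sub ((hasDerivAt_pow 2 x).const_mul (k 0 ^ 2 / 2))))
    (by simp [hF.c_zero]) ?_
  -- `c' + k 0 ^ 2 * s = (k s - k 0) * d s + k 0 * (d s + k 0 * s + k' 0 / 2 * s ^ 2)
  --   - k 0 * k' 0 / 2 * s ^ 2`
  have hkd := (hk 0).isBigO_sub_pow_one.mul_pow (hF.isBigO_d (hk 0).continuousAt)
  have hd := (isBigO_pow_of_le (m := 2) (hF.isBigO_d_sub_taylor hk hk')
    (by norm_num)).const_mul_left (k 0)
  refine ((hkd.add hd).sub (isBigO_const_mul_self (k 0 * k' 0 / 2) (· ^ 2) _)).congr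
    (fun x => ?_) (fun x => rfl)
  ring

theorem isBigO_a_sub_taylor (hF : IsFrenetSolution k a b c d) (hk : ∀ x, HasDerivAt k (k' x) x)
    (hk' : DifferentiableAt ℝ k' 0) :
    (fun s => a s - (-s + k 0 ^ 2 / 6 * s ^ 3)) =O[𝓝 0] (· ^ 4) :=
  isBigO_pow_succ_of_hasDerivAt (.of_forall fun x => (hF.hasDerivAt_a x).sub
    ((hasDerivAt_id x).neg.add ((hasDerivAt_pow 3 x).const_mul (k 0 ^ 2 / 6))))
    (by simp [hF.a_zero])
    ((hF.isBigO_c_sub_taylor hk hk').neg_left.congr (fun x => by ring) fun x => rfl)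

theorem isBigO_b_sub_taylor (hF : IsFrenetSolution k a b c d) (hk : ∀ x, HasDerivAt k (k' x) x)
    (hk' : DifferentiableAt ℝ k' 0) :
    (fun s => b s - (k 0 / 2 * s ^ 2 + k' 0 / 6 * s ^ 3)) =O[𝓝 0] (· ^ 4) :=
  isBigO_pow_succ_of_hasDerivAt (.of_forall fun x => (hF.hasDerivAt_b x).sub
    (((hasDerivAt_pow 2 x).const_mul (k 0 / 2)).add ((hasDerivAt_pow 3 x).const_mul (k' 0 / 6))))
    (by simp [hF.b_zero])
    ((hF.isBigO_d_sub_taylor hk hk').neg_left.congr (fun x => by ring) fun x => rfl)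

theorem isBigO_ac_add_bd (hF : IsFrenetSolution k a b c d) (hk : ContinuousAt k 0) :
    (fun s => a s * c s + b s * d s + s) =O[𝓝 0] (· ^ 3) :=
  (((hF.isBigO_a_add hk).add (hF.isBigO_a.mul_pow (hF.isBigO_c_sub_one hk))).add
    ((hF.isBigO_b hk).mul_pow (hF.isBigO_d hk))).congr (fun x => by ring) (fun x => rfl)

theorem isBigO_sq_add_sq (hF : IsFrenetSolution k a b c d) (hk : ContinuousAt k 0) :
    (fun s => a s ^ 2 + b s ^ 2 - s ^ 2) =O[𝓝 0] (· ^ 4) :=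
  isBigO_pow_succ_of_hasDerivAt (.of_forall fun x => (((hF.hasDerivAt_a x).pow 2).add
    ((hF.hasDerivAt_b x).pow 2)).sub (hasDerivAt_pow 2 x)) (by simp [hF.a_zero, hF.b_zero])
    (((hF.isBigO_ac_add_bd hk).const_mul_left (-2)).congr (fun x => by ring) (fun x => rfl))

theorem isBigO_bc_sub_ad (hF : IsFrenetSolution k a b c d) (hk : ∀ x, HasDerivAt k (k' x) x) :
    (fun s => b s * c s - a s * d s + k 0 / 2 * s ^ 2) =O[𝓝 0] (· ^ 3) := by
  refine isBigO_pow_succ_of_hasDerivAt (.of_forall fun x => (((hF.hasDerivAt_b x).mul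
    (hF.hasDerivAt_c x)).sub ((hF.hasDerivAt_a x).mul (hF.hasDerivAt_d x))).add
    ((hasDerivAt_pow 2 x).const_mul (k 0 / 2))) (by simp [hF.a_zero, hF.b_zero]) ?_
  -- the derivative is `k s * (a s * c s + b s * d s + s) - (k s - k 0) * s`
  have hkS := (hk 0).continuousAt.isBigO_pow_zero.mul_pow
    (isBigO_pow_of_le (m := 2) (hF.isBigO_ac_add_bd (hk 0).continuousAt) (by norm_num))
  have hks := (hk 0).isBigO_sub_pow_one.mul_pow ((isBigO_refl (· ^ 1) (𝓝 (0 : ℝ))).congr_left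
    fun x => pow_one x)
  refine (hkS.sub hks).congr (fun x => ?_) (fun x => rfl)
  ring

theorem exists_uniform_bounds (hF : IsFrenetSolution k a b c d)
    (hk : ∀ x, HasDerivAt k (k' x) x) (hk' : DifferentiableAt ℝ k' 0) :
    ∃ s₀ > (0 : ℝ), ∃ C > (0 : ℝ), ∀ h : ℝ, |h| ≤ 1 → ∀ s : ℝ, |s| ≤ s₀ →
      |a s ^ 2 + b s ^ 2 - s ^ 2 + h * (2 * (b s - (k 0 / 2 * s ^ 2 + k' 0 / 6 * s ^ 3)))|
        ≤ C * s ^ 4 ∧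
      |b s - (k 0 / 2 * s ^ 2 + k' 0 / 6 * s ^ 3)| ≤ C * s ^ 4 ∧
      |b s * c s - a s * d s + k 0 / 2 * s ^ 2 + h * (c s - (1 - k 0 ^ 2 / 2 * s ^ 2))|
        ≤ C * |s| ^ 3 ∧
      |a s - (-s + k 0 ^ 2 / 6 * s ^ 3)| ≤ C * s ^ 4 ∧
      |a s * c s + b s * d s + s + h * (d s - (-(k 0 * s) - k' 0 / 2 * s ^ 2))| ≤ C * |s| ^ 3 ∧
      |c s - (1 - k 0 ^ 2 / 2 * s ^ 2)| ≤ C * |s| ^ 3 ∧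
      |d s - (-(k 0 * s) - k' 0 / 2 * s ^ 2)| ≤ C * |s| ^ 3 := by
  have hk0 := (hk 0).continuousAt
  obtain ⟨C₄, hC₄, h₄⟩ := (((hF.isBigO_sq_add_sq hk0).norm_left.add
    (hF.isBigO_b_sub_taylor hk hk').norm_left).add
    (hF.isBigO_a_sub_taylor hk hk').norm_left).exists_pos
  obtain ⟨C₃, hC₃, h₃⟩ := ((((hF.isBigO_bc_sub_ad hk).norm_left.add
    (hF.isBigO_c_sub_taylor hk hk').norm_left).add (hF.isBigO_ac_add_bd hk0).norm_left).add
    (hF.isBigO_d_sub_taylor hk hk').norm_left).exists_pos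
  obtain ⟨s₀, hs₀, hball⟩ := nhds_basis_closedBall.eventually_iff.1 (h₄.bound.and h₃.bound)
  refine ⟨s₀, hs₀, 2 * (C₃ + C₄), by positivity, fun h hh s hs => ?_⟩
  obtain ⟨hs₄, hs₃⟩ := hball (by simpa using hs)
  simp only [Real.norm_eq_abs, abs_pow] at hs₄ hs₃
  rw [abs_of_nonneg (by positivity)] at hs₄ hs₃
  rw [Even.pow_abs (by decide)] at hs₄
  have := abs_nonneg (a s ^ 2 + b s ^ 2 - s ^ 2)
  have := abs_nonneg (b s - (k 0 / 2 * s ^ 2 + k' 0 / 6 * s ^ 3))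
  have := abs_nonneg (a s - (-s + k 0 ^ 2 / 6 * s ^ 3))
  have := abs_nonneg (b s * c s - a s * d s + k 0 / 2 * s ^ 2)
  have := abs_nonneg (c s - (1 - k 0 ^ 2 / 2 * s ^ 2))
  have := abs_nonneg (a s * c s + b s * d s + s)
  have := abs_nonneg (d s - (-(k 0 * s) - k' 0 / 2 * s ^ 2))
  have : 0 ≤ C₃ * s ^ 4 := by positivity
  have : 0 ≤ C₄ * |s| ^ 3 := by positivity
  refine ⟨(abs_add_mul_le _ _ hh).trans ?_, by linarith,
    (abs_add_mul_le _ _ hh).trans (by linarith), by linarith,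
    (abs_add_mul_le _ _ hh).trans (by linarith), by linarith, by linarith⟩
  rw [abs_mul, abs_two]
  linarith

end IsFrenetSolution

theorem HasDerivAt.dot2 {f g : ℝ → ℝ × ℝ} {f' g' : ℝ × ℝ} {x : ℝ} (hf : HasDerivAt f f' x)
    (hg : HasDerivAt g g' x) :
    HasDerivAt (fun y => dot2 (f y) (g y)) (dot2 f' (g x) + dot2 (f x) g') x := by
  have hf₁ : HasDerivAt (fun y => (f y).1) f'.1 x := by
    simpa using hf.hasFDerivAt.fst.hasDerivAt
  have hf₂ : HasDerivAt (fun y => (f y).2) f'.2 x := by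
    simpa using hf.hasFDerivAt.snd.hasDerivAt
  have hg₁ : HasDerivAt (fun y => (g y).1) g'.1 x := by
    simpa using hg.hasFDerivAt.fst.hasDerivAt
  have hg₂ : HasDerivAt (fun y => (g y).2) g'.2 x := by
    simpa using hg.hasFDerivAt.snd.hasDerivAt
  unfold _root_.dot2
  exact ((hf₁.mul hg₁).add (hf₂.mul hg₂)).congr_deriv (by ring)

section PlaneCurve

variable {γ : ℝ → ℝ × ℝ}

theorem contDiff_curv (hγ : ContDiff ℝ (⊤ : ℕ∞) γ) : ContDiff ℝ (⊤ : ℕ∞) (curv γ) := by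
  have h₁ : ContDiff ℝ (⊤ : ℕ∞) (deriv γ) := hγ.iterate_deriv 1
  have h₂ : ContDiff ℝ (⊤ : ℕ∞) (deriv (deriv γ)) := hγ.iterate_deriv 2
  unfold curv dot2 nor
  fun_prop

theorem deriv_deriv_eq_neg_curv_smul_nor (hγ : ContDiff ℝ (⊤ : ℕ∞) γ)
    (harc : ∀ s, dot2 (deriv γ s) (deriv γ s) = 1) (u : ℝ) :
    deriv (deriv γ) u = -curv γ u • nor γ u := by
  have horth : dot2 (deriv (deriv γ) u) (deriv γ u) = 0 := by
    have h := (hasDerivAt_deriv hγ u).dot2 (hasDerivAt_deriv hγ u)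
    simp only [harc] at h
    have := h.unique (hasDerivAt_const u 1)
    simp only [dot2] at this ⊢
    linarith
  have hu := harc u
  simp only [dot2] at horth hu
  simp only [curv, nor, dot2, Prod.smul_mk, smul_eq_mul]
  ext
  · linear_combination -(deriv (deriv γ) u).1 * hu + (deriv γ u).1 * horth
  · linear_combination -(deriv (deriv γ) u).2 * hu + (deriv γ u).2 * horth

theorem isFrenetSolution_frame (hγ : ContDiff ℝ (⊤ : ℕ∞) γ)
    (harc : ∀ s, dot2 (deriv γ s) (deriv γ s) = 1) (t : ℝ) :
    IsFrenetSolution (fun s => curv γ (t + s))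
      (fun s => dot2 (γ t - γ (t + s)) (tang γ t)) (fun s => dot2 (γ t - γ (t + s)) (nor γ t))
      (fun s => dot2 (tang γ (t + s)) (tang γ t)) (fun s => dot2 (tang γ (t + s)) (nor γ t)) := by
  have hP : ∀ x, HasDerivAt (fun s => γ t - γ (t + s)) (-tang γ (t + x)) x := fun x =>
    ((hγ.differentiable (by simp) (t + x)).hasDerivAt.comp_const_add t x).const_sub (γ t)
  have hV : ∀ x, HasDerivAt (fun s => tang γ (t + s)) (-curv γ (t + x) • nor γ (t + x)) x :=
    fun x => (deriv_deriv_eq_neg_curv_smul_nor hγ harc (t + x) ▸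
      hasDerivAt_deriv hγ (t + x)).comp_const_add t x
  refine ⟨fun x => ((hP x).dot2 (hasDerivAt_const x _)).congr_deriv ?_,
    fun x => ((hP x).dot2 (hasDerivAt_const x _)).congr_deriv ?_,
    fun x => ((hV x).dot2 (hasDerivAt_const x _)).congr_deriv ?_,
    fun x => ((hV x).dot2 (hasDerivAt_const x _)).congr_deriv ?_,
    by simp [dot2], by simp [dot2], by simpa [tang] using harc t, ?_⟩
  all_goals simp only [dot2, nor, tang, Prod.fst_neg, Prod.snd_neg, Prod.smul_fst, Prod.smul_snd,
    smul_eq_mul, Prod.fst_zero, Prod.snd_zero, add_zero]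
  all_goals ring

end PlaneCurve

theorem stmt12_general (γ : ℝ → ℝ × ℝ)
    (hγ : ContDiff ℝ (⊤ : ℕ∞) γ)
    (harc : ∀ s, dot2 (deriv γ s) (deriv γ s) = 1)
    (t : ℝ) :
    ∃ h₀ > (0 : ℝ), ∃ s₀ > (0 : ℝ), ∃ C > (0 : ℝ),
      ∀ h : ℝ, |h| ≤ h₀ → ∀ s : ℝ, |s| ≤ s₀ →
        (|dot2 (γ t + h • nor γ t - γ (t + s)) (γ t + h • nor γ t - γ (t + s))
            - h ^ 2 - s ^ 2 * (1 + h * curv γ t) - h / 3 * deriv (curv γ) t * s ^ 3|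
          ≤ C * s ^ 4) ∧
        (|dot2 (γ t + h • nor γ t - γ (t + s)) (nor γ t)
            - h - curv γ t / 2 * s ^ 2 - deriv (curv γ) t / 6 * s ^ 3| ≤ C * s ^ 4) ∧
        (|dot2 (γ t + h • nor γ t - γ (t + s)) (nor γ (t + s))
            - h + s ^ 2 / 2 * (curv γ t + h * (curv γ t) ^ 2)| ≤ C * |s| ^ 3) ∧
        (|dot2 (γ t + h • nor γ t - γ (t + s)) (tang γ t)
            + s - (curv γ t) ^ 2 / 6 * s ^ 3| ≤ C * s ^ 4) ∧
        (|dot2 (γ t + h • nor γ t - γ (t + s)) (tang γ (t + s))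
            + (1 + h * curv γ t) * s + s ^ 2 / 2 * h * deriv (curv γ) t| ≤ C * |s| ^ 3) ∧
        (|dot2 (nor γ t) (nor γ (t + s)) - 1 + (curv γ t) ^ 2 / 2 * s ^ 2| ≤ C * |s| ^ 3) ∧
        (|dot2 (tang γ t) (tang γ (t + s)) - 1 + (curv γ t) ^ 2 / 2 * s ^ 2| ≤ C * |s| ^ 3) ∧
        (|dot2 (nor γ t) (tang γ (t + s)) + curv γ t * s + deriv (curv γ) t / 2 * s ^ 2|
          ≤ C * |s| ^ 3) := by
  have hcurv := contDiff_curv hγ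
  have hk : ∀ x, HasDerivAt (fun s => curv γ (t + s)) (deriv (curv γ) (t + x)) x := fun x =>
    (hcurv.differentiable (by simp) (t + x)).hasDerivAt.comp_const_add t x
  have hk' : DifferentiableAt ℝ (fun s => deriv (curv γ) (t + s)) 0 :=
    ((hasDerivAt_deriv hcurv (t + 0)).comp_const_add t 0).differentiableAt
  obtain ⟨s₀, hs₀, C, hC, hbound⟩ :=
    (isFrenetSolution_frame hγ harc t).exists_uniform_bounds hk hk'
  refine ⟨1, one_pos, s₀, hs₀, C, hC, fun h hh s hs => ?_⟩
  obtain ⟨h₁, h₂, h₃, h₄, h₅, h₆, h₇⟩ := hbound h hh s hs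
  -- In the frame `(τ(t), n(t))`, `γ t + h • nor γ t - γ (t + s)` has coordinates `(a, h + b)`
  -- and `nor γ (t + s)` has coordinates `(-d, c)`; the identities below hold modulo `|τ(t)| = 1`.
  have hT := harc t
  simp only [add_zero, dot2, nor, tang, Prod.fst_add, Prod.snd_add, Prod.fst_sub, Prod.snd_sub,
    Prod.smul_fst, Prod.smul_snd, smul_eq_mul] at hT h₁ h₂ h₃ h₄ h₅ h₆ h₇ ⊢
  refine ⟨?_, ?_, ?_, ?_, ?_, ?_, ?_, ?_⟩
  · convert h₁ using 2; grind
  · convert h₂ using 2; grind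
  · convert h₃ using 2; grind
  · convert h₄ using 2; grind
  · convert h₅ using 2; grind
  · convert h₆ using 2; grind
  · convert h₆ using 2; grind
  · convert h₇ using 2; grind

theorem stmt12 (L : ℝ) (hL : 0 < L) (γ : ℝ → ℝ × ℝ)
    (hγ : ContDiff ℝ (⊤ : ℕ∞) γ)
    (hper : ∀ s, γ (s + L) = γ s)
    (hinj : Set.InjOn γ (Set.Ico 0 L))
    (harc : ∀ s, dot2 (deriv γ s) (deriv γ s) = 1)
    (t : ℝ) :
    ∃ h₀ > (0 : ℝ), ∃ s₀ > (0 : ℝ), ∃ C > (0 : ℝ),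
      ∀ h : ℝ, |h| ≤ h₀ → ∀ s : ℝ, |s| ≤ s₀ →
        (|dot2 (γ t + h • nor γ t - γ (t + s)) (γ t + h • nor γ t - γ (t + s))
            - h ^ 2 - s ^ 2 * (1 + h * curv γ t) - h / 3 * deriv (curv γ) t * s ^ 3|
          ≤ C * s ^ 4) ∧
        (|dot2 (γ t + h • nor γ t - γ (t + s)) (nor γ t)
            - h - curv γ t / 2 * s ^ 2 - deriv (curv γ) t / 6 * s ^ 3| ≤ C * s ^ 4) ∧
        (|dot2 (γ t + h • nor γ t - γ (t + s)) (nor γ (t + s))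
            - h + s ^ 2 / 2 * (curv γ t + h * (curv γ t) ^ 2)| ≤ C * |s| ^ 3) ∧
        (|dot2 (γ t + h • nor γ t - γ (t + s)) (tang γ t)
            + s - (curv γ t) ^ 2 / 6 * s ^ 3| ≤ C * s ^ 4) ∧
        (|dot2 (γ t + h • nor γ t - γ (t + s)) (tang γ (t + s))
            + (1 + h * curv γ t) * s + s ^ 2 / 2 * h * deriv (curv γ) t| ≤ C * |s| ^ 3) ∧
        (|dot2 (nor γ t) (nor γ (t + s)) - 1 + (curv γ t) ^ 2 / 2 * s ^ 2| ≤ C * |s| ^ 3) ∧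
        (|dot2 (tang γ t) (tang γ (t + s)) - 1 + (curv γ t) ^ 2 / 2 * s ^ 2| ≤ C * |s| ^ 3) ∧
        (|dot2 (nor γ t) (tang γ (t + s)) + curv γ t * s + deriv (curv γ) t / 2 * s ^ 2|
          ≤ C * |s| ^ 3) :=
  stmt12_general γ hγ harc t
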